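/- There exists a universal constant c > 0 such that for every finite nonempty alphabet Σ, every stochastic language P over Σ, every ε > 0, every δ ∈ (0,1), and every integer n ≥ (c²/ε²)·(2 − log(δ/4)), the μ-measure of the set {ω ∈ Ω : for every w ∈ Σ*, |P_{ω,n}(wΣ*) − P(wΣ*)| ≤ ε} is greater than 1 − δ (log denotes the natural logarithm). -/

import Mathlib

open scoped BigOperators
open MeasureTheory

/-- A stochastic language over the alphabet `A`: a nonnegative real-valued function on
words whose values are summable with sum `1`. -/
def IsStochastic {A : Type*} (p : List A → ℝ) : Prop :=
  (∀ w, 0 ≤ p w) ∧ HasSum p 1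

/-- `pre w` is the set `wΣ*` of words having `w` as a prefix. -/
def pre {A : Type*} (w : List A) : Set (List A) := {v | w <+: v}

/-- The residualLang language `u⁻¹P` of `P` with respect to the word `u`. -/
noncomputable def residualLang {A : Type*} (P : List A → ℝ) (u w : List A) : ℝ :=
  P (u ++ w) / ∑' v : pre u, P (v : List A)

/-- The empirical probability of the set `X` among the first `m` samples of `ω`. -/
noncomputable def emp {A : Type*} (ω : ℕ → List A) (m : ℕ) (X : Set (List A)) : ℝ :=
  (∑ i ∈ Finset.range m, X.indicator (fun _ => (1 : ℝ)) (ω i)) / m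

/-- `x` is a solution of the system `I({u 0, …, u (n-1)}, v, ω, m, ε)`. -/
def IsSolution {A : Type*} {n : ℕ} (u : Fin n → List A) (v : List A)
    (ω : ℕ → List A) (m : ℕ) (ε : ℝ) (x : Fin n → ℝ) : Prop :=
  (∑ i, x i = 1) ∧
    ∀ w : List A, (∃ i < m, w <:+: ω i) →
      |emp ω m (pre (v ++ w)) / emp ω m (pre v) -
          ∑ i, x i * (emp ω m (pre (u i ++ w)) / emp ω m (pre (u i)))| ≤ ε

/-- Words over a countable alphabet carry the discrete (full) σ-algebra. -/
instance listMeasurableSpace {A : Type*} : MeasurableSpace (List A) := ⊤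

/-- `μ` is the infinite i.i.d. product of the law on `List A` given by `P`:
its finite-dimensional cylinder probabilities are the corresponding products. -/
def IsIIDProduct {A : Type*} (P : List A → ℝ) (μ : Measure (ℕ → List A)) : Prop :=
  ∀ (s : Finset ℕ) (E : ℕ → Set (List A)),
    μ {ω | ∀ i ∈ s, ω i ∈ E i} = ∏ i ∈ s, ∑' w : E i, ENNReal.ofReal (P (w : List A))


/-!
Order words by `wordCode`, a base-`(|Σ| + 1)` expansion with nonzero digits; every cylinder
`wΣ*` is then the difference of two up-sets `{v | a ≤ wordCode v}`, so it suffices to bound the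
empirical deviation uniformly over up-sets. This is done by chaining: the largest up-sets of mass
at most `k / 2^ℓ` form nets, consecutive nets differ by sets of mass at most `2^(1-ℓ)`, and a
Chernoff bound that is sensitive to this small mass, applied with tolerance `ε (5/6)^ℓ / 20` at
level `ℓ`, fails with probability `exp (-n ε² (25/18)^ℓ / 3200)`. The `2^ℓ + 1` links of level `ℓ`
then contribute a summable series, while the tolerances together with the resolution of the
finest net add up to less than `ε / 2`. Deviations
from below are deviations from above of the complementary up-sets for the reversed order.
-/

open Set

theorem Nat.ceil_mul_two_add_one_div_two {K : Type*} [Field K] [LinearOrder K]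
    [IsStrictOrderedRing K] [FloorSemiring K] (y : K) : (⌈y * 2⌉₊ + 1) / 2 = ⌈y⌉₊ := by
  have h1 : ⌈y * 2⌉₊ ≤ 2 * ⌈y⌉₊ :=
    Nat.ceil_le.2 (by push_cast; linarith [Nat.le_ceil y])
  have h2 : ⌈y⌉₊ ≤ (⌈y * 2⌉₊ + 1) / 2 := by
    refine Nat.ceil_le.2 ?_
    have hnat : ⌈y * 2⌉₊ ≤ 2 * ((⌈y * 2⌉₊ + 1) / 2) := by omega
    have hreal : (⌈y * 2⌉₊ : K) ≤ 2 * (((⌈y * 2⌉₊ + 1) / 2 : ℕ) : K) := by exact_mod_cast hnat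
    linarith [Nat.le_ceil (y * 2)]
  omega

namespace PrefixDeviation

noncomputable section

section WordCode

variable {A : Type*} [Fintype A]

variable (A) in
def codeBase : ℝ := Fintype.card A + 1

def digit (a : A) : ℕ := Fintype.equivFin A a

/-- The base-`codeBase A` expansion `0.(digit a₁ + 1)(digit a₂ + 1)…`; as no digit is `0`, the
codes of the words with prefix `w` fill an interval of length `codeBase A ^ (-|w|)`. -/
def wordCode : List A → ℝ
  | [] => 0
  | a :: t => (digit a + 1 + wordCode t) / codeBase A

lemma codeBase_pos : 0 < codeBase A := by unfold codeBase; positivity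

lemma digit_add_two_le (a : A) : (digit a : ℝ) + 2 ≤ codeBase A := by
  have : digit a + 1 ≤ Fintype.card A := (Fintype.equivFin A a).isLt
  unfold codeBase
  exact_mod_cast Nat.add_le_add_right this 1

lemma digit_injective : Function.Injective (digit (A := A)) :=
  Fin.val_injective.comp (Fintype.equivFin A).injective

lemma wordCode_cons (a : A) (t : List A) :
    wordCode (a :: t) = (digit a + 1 + wordCode t) / codeBase A := rfl

lemma wordCode_nonneg (t : List A) : 0 ≤ wordCode t := by
  induction t with
  | nil => exact le_rfl
  | cons a t ih => rw [wordCode_cons]; exact div_nonneg (by positivity) codeBase_pos.le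

lemma wordCode_add_le_one (t : List A) : wordCode t + (codeBase A)⁻¹ ^ t.length ≤ 1 := by
  induction t with
  | nil => simp [wordCode]
  | cons a t ih =>
    have hb := codeBase_pos (A := A)
    have hcons : wordCode (a :: t) + (codeBase A)⁻¹ ^ (a :: t).length
        = (digit a + 1 + (wordCode t + (codeBase A)⁻¹ ^ t.length)) / codeBase A := by
      rw [wordCode_cons, List.length_cons, pow_succ]
      field_simp
      ring
    rw [hcons, div_le_one hb]
    linarith [digit_add_two_le a]

lemma wordCode_append (w u : List A) :
    wordCode (w ++ u) = wordCode w + (codeBase A)⁻¹ ^ w.length * wordCode u := by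
  induction w with
  | nil => simp [wordCode]
  | cons a t ih =>
    have hb := codeBase_pos (A := A)
    rw [List.cons_append, wordCode_cons, wordCode_cons, ih, List.length_cons, pow_succ]
    field_simp
    ring

lemma isPrefix_iff_wordCode {w v : List A} :
    w <+: v ↔ wordCode w ≤ wordCode v ∧ wordCode v < wordCode w + (codeBase A)⁻¹ ^ w.length := by
  have hb := codeBase_pos (A := A)
  constructor
  · rintro ⟨u, rfl⟩
    have hu : wordCode u < 1 := by
      linarith [wordCode_add_le_one u, pow_pos (inv_pos.2 hb) u.length]
    have hw := pow_pos (inv_pos.2 hb) w.length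
    rw [wordCode_append]
    exact ⟨le_add_of_nonneg_right (mul_nonneg hw.le (wordCode_nonneg u)),
      add_lt_add_right (mul_lt_of_lt_one_right hw hu) _⟩
  · induction w generalizing v with
    | nil => exact fun _ => List.nil_prefix
    | cons a w ih =>
      rintro ⟨hle, hlt⟩
      cases v with
      | nil =>
        have : 0 < wordCode (a :: w) := by
          rw [wordCode_cons]
          exact div_pos (by linarith [wordCode_nonneg w, (digit a).cast_nonneg (α := ℝ)]) hb
        exact absurd hle (not_le.2 this)
      | cons c v =>
        have hgap : (codeBase A)⁻¹ ^ (a :: w).length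
            = (codeBase A)⁻¹ ^ w.length / codeBase A := by
          rw [List.length_cons, pow_succ, div_eq_mul_inv]
        rw [wordCode_cons, wordCode_cons, div_le_div_iff_of_pos_right hb] at hle
        rw [wordCode_cons, wordCode_cons, hgap, ← add_div, div_lt_div_iff_of_pos_right hb] at hlt
        have hw := wordCode_add_le_one w
        have hv := wordCode_add_le_one v
        have hw0 := wordCode_nonneg w
        have hv0 := wordCode_nonneg v
        have hpos : 0 < (codeBase A)⁻¹ ^ v.length := pow_pos (inv_pos.2 hb) _
        have hac : digit a = digit c := by
          have h1 : (digit a : ℝ) < digit c + 1 := by linarith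
          have h2 : (digit c : ℝ) < digit a + 1 := by linarith
          exact_mod_cast le_antisymm (Nat.lt_succ_iff.1 (by exact_mod_cast h1))
            (Nat.lt_succ_iff.1 (by exact_mod_cast h2))
        obtain rfl := digit_injective hac
        exact List.cons_prefix_cons.2 ⟨rfl, ih ⟨by linarith, by linarith⟩⟩

end WordCode

section UpperSets

variable {α : Type*} (f : α → ℝ)

def IsUpperFor (U : Set α) : Prop := ∀ ⦃x y⦄, x ∈ U → f x ≤ f y → y ∈ U

variable {f}

lemma isUpperFor_setOf_le (a : ℝ) : IsUpperFor f {x | a ≤ f x} :=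
  fun _ _ hx hxy => le_trans hx hxy

lemma IsUpperFor.total {U V : Set α} (hU : IsUpperFor f U) (hV : IsUpperFor f V) :
    U ⊆ V ∨ V ⊆ U := by
  by_contra! h
  obtain ⟨⟨x, hxU, hxV⟩, ⟨y, hyV, hyU⟩⟩ := And.intro (not_subset.1 h.1) (not_subset.1 h.2)
  rcases le_total (f x) (f y) with hxy | hyx
  · exact hyU (hU hxU hxy)
  · exact hxV (hV hyV hyx)

lemma IsUpperFor.compl {U : Set α} (hU : IsUpperFor f U) : IsUpperFor (-f) Uᶜ :=
  fun _ _ hx hxy hy => hx (hU hy (neg_le_neg_iff.1 hxy))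

variable [MeasurableSpace α] (f) (ρ : Measure α)

def maxUpperSet (τ : ℝ) : Set α := ⋃₀ {U | IsUpperFor f U ∧ ρ.real U ≤ τ}

variable {f ρ}

lemma subset_maxUpperSet {U : Set α} {τ : ℝ} (hU : IsUpperFor f U) (hUτ : ρ.real U ≤ τ) :
    U ⊆ maxUpperSet f ρ τ :=
  subset_sUnion_of_mem ⟨hU, hUτ⟩

lemma maxUpperSet_mono {τ τ' : ℝ} (h : τ ≤ τ') : maxUpperSet f ρ τ ⊆ maxUpperSet f ρ τ' :=
  sUnion_mono fun _ hU => ⟨hU.1, hU.2.trans h⟩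

/-- The union defining `maxUpperSet` may be uncountable, but on a countable space it is a union
of countably many members of a chain, whose measure is the supremum of theirs. -/
lemma measureReal_maxUpperSet_le [Countable α] [IsFiniteMeasure ρ] {τ : ℝ} (hτ : 0 ≤ τ) :
    ρ.real (maxUpperSet f ρ τ) ≤ τ := by
  have hmem : ∀ x : maxUpperSet f ρ τ, ∃ U, (IsUpperFor f U ∧ ρ.real U ≤ τ) ∧ (x : α) ∈ U :=
    fun x => x.2
  choose U hU hxU using hmem
  have hunion : maxUpperSet f ρ τ = ⋃ x, U x :=
    Subset.antisymm (fun x hx => mem_iUnion.2 ⟨⟨x, hx⟩, hxU _⟩)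
      (iUnion_subset fun x => subset_maxUpperSet (hU x).1 (hU x).2)
  have hdir : Directed (· ⊆ ·) U := fun x y =>
    ((hU x).1.total (hU y).1).elim (fun h => ⟨y, h, subset_rfl⟩) fun h => ⟨x, subset_rfl, h⟩
  have hle : ρ (maxUpperSet f ρ τ) ≤ ENNReal.ofReal τ := by
    rw [hunion, hdir.measure_iUnion]
    exact iSup_le fun x => (ENNReal.le_ofReal_iff_toReal_le (measure_ne_top ρ _) hτ).2 (hU x).2
  exact ENNReal.toReal_le_of_le_ofReal hτ hle

end UpperSets

section SampleCount

variable {α : Type*} {n : ℕ}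

def sampleCount (v : Fin n → α) (X : Set α) : ℝ := ∑ i, X.indicator 1 (v i)

lemma sampleCount_nonneg (v : Fin n → α) (X : Set α) : 0 ≤ sampleCount v X :=
  Finset.sum_nonneg fun _ _ => indicator_nonneg (fun _ _ => zero_le_one) _

lemma sampleCount_le (v : Fin n → α) (X : Set α) : sampleCount v X ≤ n := by
  calc sampleCount v X ≤ ∑ _i : Fin n, (1 : ℝ) :=
        Finset.sum_le_sum fun _ _ => indicator_le_self' (fun _ _ => zero_le_one) _
    _ = n := by simp

lemma sampleCount_mono (v : Fin n → α) {X Y : Set α} (h : X ⊆ Y) :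
    sampleCount v X ≤ sampleCount v Y :=
  Finset.sum_le_sum fun _ _ => indicator_le_indicator_of_subset h (fun _ => zero_le_one) _

lemma sampleCount_univ (v : Fin n → α) : sampleCount v univ = n := by
  simp [sampleCount]

lemma sampleCount_sdiff (v : Fin n → α) {X Y : Set α} (h : Y ⊆ X) :
    sampleCount v (X \ Y) = sampleCount v X - sampleCount v Y := by
  simp only [sampleCount, indicator_sdiff h, Pi.sub_apply, Finset.sum_sub_distrib]

variable [MeasurableSpace α] (ρ : Measure α)

def sampleDev (v : Fin n → α) (X : Set α) : ℝ := sampleCount v X - n * ρ.real X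

variable {ρ}

lemma sampleDev_univ [IsProbabilityMeasure ρ] (v : Fin n → α) : sampleDev ρ v univ = 0 := by
  simp [sampleDev, sampleCount_univ]

lemma abs_sampleDev_le [IsProbabilityMeasure ρ] (v : Fin n → α) (X : Set α) :
    |sampleDev ρ v X| ≤ n := by
  have hn : (0 : ℝ) ≤ n := n.cast_nonneg
  have hX : n * ρ.real X ≤ n := mul_le_of_le_one_right hn measureReal_le_one
  rw [sampleDev, abs_le]
  constructor <;> nlinarith [sampleCount_nonneg v X, sampleCount_le v X,
    measureReal_nonneg (μ := ρ) (s := X)]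

lemma setOf_exists_abs_sampleDev_gt_eq_empty [IsProbabilityMeasure ρ] {ι : Type*} (X : ι → Set α)
    (hn : 0 < n) {ε : ℝ} (hε : 1 < ε) :
    {v : Fin n → α | ∃ i, n * ε < |sampleDev ρ v (X i)|} = ∅ := by
  refine eq_empty_of_forall_notMem fun v ⟨i, hi⟩ => ?_
  have : (n : ℝ) < n * ε := lt_mul_of_one_lt_right (by exact_mod_cast hn) hε
  linarith [abs_sampleDev_le (ρ := ρ) v (X i)]

variable [DiscreteMeasurableSpace α]

lemma sampleDev_sdiff [IsFiniteMeasure ρ] (v : Fin n → α) {X Y : Set α} (h : Y ⊆ X) :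
    sampleDev ρ v (X \ Y) = sampleDev ρ v X - sampleDev ρ v Y := by
  rw [sampleDev, sampleDev, sampleDev, sampleCount_sdiff v h,
    measureReal_sdiff h (.of_discrete)]
  ring

lemma sampleDev_compl [IsProbabilityMeasure ρ] (v : Fin n → α) (X : Set α) :
    sampleDev ρ v Xᶜ = -sampleDev ρ v X := by
  rw [compl_eq_univ_sdiff, sampleDev_sdiff v (subset_univ X), sampleDev_univ, zero_sub]

end SampleCount

section Chaining

variable {α : Type*} [MeasurableSpace α] (f : α → ℝ) (ρ : Measure α)

def dyadicNet (ℓ k : ℕ) : Set α := maxUpperSet f ρ (k / 2 ^ ℓ)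

def chainParent : ℕ → ℕ → Set α
  | 0, _ => univ
  | ℓ + 1, k => dyadicNet f ρ ℓ ((k + 1) / 2)

def chainLink (ℓ k : ℕ) : Set α := chainParent f ρ ℓ k \ dyadicNet f ρ ℓ k

def chainBadSet (n : ℕ) (β : ℕ → ℝ) (J : ℕ) : Set (Fin n → α) :=
  ⋃ ℓ ∈ Finset.range (J + 1), ⋃ k ∈ Finset.range (2 ^ ℓ + 1),
    {v | ρ.real (chainLink f ρ ℓ k) ≤ 2 * (1 / 2) ^ ℓ ∧
      n * β ℓ < |sampleDev ρ v (chainLink f ρ ℓ k)|}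

variable {f ρ}

lemma dyadicNet_subset_chainParent (ℓ k : ℕ) : dyadicNet f ρ ℓ k ⊆ chainParent f ρ ℓ k := by
  cases ℓ with
  | zero => exact subset_univ _
  | succ ℓ =>
    refine maxUpperSet_mono ?_
    have hk : (k : ℝ) ≤ 2 * (((k + 1) / 2 : ℕ) : ℝ) := by
      exact_mod_cast (by omega : k ≤ 2 * ((k + 1) / 2))
    rw [pow_succ, mul_comm, ← div_div]
    gcongr
    linarith

lemma subset_dyadicNet_ceil {U : Set α} (hU : IsUpperFor f U) (ℓ : ℕ) :
    U ⊆ dyadicNet f ρ ℓ ⌈ρ.real U * 2 ^ ℓ⌉₊ :=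
  subset_maxUpperSet hU ((le_div_iff₀ (by positivity)).2 (Nat.le_ceil _))

lemma chainParent_succ_ceil (m : ℝ) (ℓ : ℕ) :
    chainParent f ρ (ℓ + 1) ⌈m * 2 ^ (ℓ + 1)⌉₊ = dyadicNet f ρ ℓ ⌈m * 2 ^ ℓ⌉₊ := by
  rw [chainParent, pow_succ, ← mul_assoc, Nat.ceil_mul_two_add_one_div_two]

lemma measureReal_dyadicNet_ceil_lt [Countable α] [IsFiniteMeasure ρ] {m : ℝ} (hm : 0 ≤ m) (ℓ : ℕ) :
    ρ.real (dyadicNet f ρ ℓ ⌈m * 2 ^ ℓ⌉₊) < m + (1 / 2) ^ ℓ := by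
  have h2 : (0 : ℝ) < 2 ^ ℓ := by positivity
  calc ρ.real (dyadicNet f ρ ℓ ⌈m * 2 ^ ℓ⌉₊) ≤ ⌈m * 2 ^ ℓ⌉₊ / 2 ^ ℓ :=
        measureReal_maxUpperSet_le (by positivity)
    _ < (m * 2 ^ ℓ + 1) / 2 ^ ℓ :=
        div_lt_div_of_pos_right (Nat.ceil_lt_add_one (by positivity)) h2
    _ = m + (1 / 2) ^ ℓ := by rw [div_pow, one_pow]; field_simp

lemma abs_sampleDev_le_of_subset [DiscreteMeasurableSpace α] [IsFiniteMeasure ρ] {n : ℕ}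
    (v : Fin n → α) {N M : Set α} (h : N ⊆ M) {a b : ℝ}
    (hM : |sampleDev ρ v M| ≤ a) (hlink : |sampleDev ρ v (M \ N)| ≤ b) :
    |sampleDev ρ v N| ≤ a + b := by
  have : sampleDev ρ v N = sampleDev ρ v M - sampleDev ρ v (M \ N) := by
    rw [sampleDev_sdiff v h]; ring
  rw [this]
  exact (abs_sub _ _).trans (add_le_add hM hlink)

variable [Countable α] [DiscreteMeasurableSpace α] [IsProbabilityMeasure ρ]

lemma measureReal_chainLink_ceil_le {U : Set α} (hU : IsUpperFor f U) (ℓ : ℕ) :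
    ρ.real (chainLink f ρ ℓ ⌈ρ.real U * 2 ^ ℓ⌉₊) ≤ 2 * (1 / 2) ^ ℓ := by
  rw [chainLink, measureReal_sdiff (dyadicNet_subset_chainParent _ _) .of_discrete]
  have hnet : ρ.real U ≤ ρ.real (dyadicNet f ρ ℓ ⌈ρ.real U * 2 ^ ℓ⌉₊) :=
    measureReal_mono (subset_dyadicNet_ceil hU ℓ)
  cases ℓ with
  | zero =>
    simp only [chainParent, probReal_univ, pow_zero, mul_one]
    linarith [measureReal_nonneg (μ := ρ) (s := dyadicNet f ρ 0 ⌈ρ.real U⌉₊)]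
  | succ ℓ =>
    rw [chainParent_succ_ceil]
    have := measureReal_dyadicNet_ceil_lt (ρ := ρ) (f := f) (measureReal_nonneg (μ := ρ) (s := U)) ℓ
    have hhalf : 2 * (1 / 2 : ℝ) ^ (ℓ + 1) = (1 / 2) ^ ℓ := by ring
    linarith

variable {n : ℕ} {β : ℕ → ℝ} {J : ℕ} {v : Fin n → α}

lemma abs_sampleDev_chainLink_ceil_le (hv : v ∉ chainBadSet f ρ n β J) {U : Set α}
    (hU : IsUpperFor f U) {ℓ : ℕ} (hℓ : ℓ ≤ J) :
    |sampleDev ρ v (chainLink f ρ ℓ ⌈ρ.real U * 2 ^ ℓ⌉₊)| ≤ n * β ℓ := by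
  have hk : ⌈ρ.real U * 2 ^ ℓ⌉₊ ≤ 2 ^ ℓ := Nat.ceil_le.2 (by
    push_cast
    nlinarith [measureReal_le_one (μ := ρ) (s := U), pow_pos (by norm_num : (0 : ℝ) < 2) ℓ])
  simp only [chainBadSet, mem_iUnion, Finset.mem_range, mem_ofPred_eq, not_exists, not_and,
    not_lt] at hv
  exact hv ℓ (by omega) _ (by omega) (measureReal_chainLink_ceil_le hU ℓ)

lemma abs_sampleDev_dyadicNet_ceil_le (hv : v ∉ chainBadSet f ρ n β J) {U : Set α}
    (hU : IsUpperFor f U) {ℓ : ℕ} (hℓ : ℓ ≤ J) :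
    |sampleDev ρ v (dyadicNet f ρ ℓ ⌈ρ.real U * 2 ^ ℓ⌉₊)|
      ≤ n * ∑ j ∈ Finset.range (ℓ + 1), β j := by
  induction ℓ with
  | zero =>
    have := abs_sampleDev_le_of_subset v (dyadicNet_subset_chainParent _ _) (a := 0)
      (by simp [chainParent, sampleDev_univ]) (abs_sampleDev_chainLink_ceil_le hv hU hℓ)
    simpa using this
  | succ ℓ ih =>
    have hparent := ih (by omega)
    rw [← chainParent_succ_ceil] at hparent
    rw [Finset.sum_range_succ, mul_add]
    exact abs_sampleDev_le_of_subset v (dyadicNet_subset_chainParent _ _) hparent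
      (abs_sampleDev_chainLink_ceil_le hv hU hℓ)

lemma sampleDev_le_of_isUpperFor (hv : v ∉ chainBadSet f ρ n β J) {U : Set α}
    (hU : IsUpperFor f U) :
    sampleDev ρ v U ≤ n * (∑ j ∈ Finset.range (J + 1), β j + (1 / 2) ^ J) := by
  have hcount := sampleCount_mono v (subset_dyadicNet_ceil (ρ := ρ) hU J)
  have hdev := (abs_le.1 (abs_sampleDev_dyadicNet_ceil_le hv hU le_rfl)).2
  have hmass :=
    measureReal_dyadicNet_ceil_lt (f := f) (ρ := ρ) (measureReal_nonneg (μ := ρ) (s := U)) J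
  have hn : (0 : ℝ) ≤ n := n.cast_nonneg
  rw [sampleDev] at hdev ⊢
  nlinarith

lemma abs_sampleDev_le_of_isUpperFor (hv : v ∉ chainBadSet f ρ n β J)
    (hv' : v ∉ chainBadSet (-f) ρ n β J) {U : Set α} (hU : IsUpperFor f U) :
    |sampleDev ρ v U| ≤ n * (∑ j ∈ Finset.range (J + 1), β j + (1 / 2) ^ J) := by
  have hlow := sampleDev_le_of_isUpperFor hv' hU.compl
  rw [sampleDev_compl] at hlow
  exact abs_le.2 ⟨by linarith, sampleDev_le_of_isUpperFor hv hU⟩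

end Chaining

section Chernoff

open ProbabilityTheory Real

variable {α : Type*} [MeasurableSpace α] [DiscreteMeasurableSpace α]
  {ρ : Measure α} [IsProbabilityMeasure ρ] {n : ℕ}

lemma mgf_indicator_one_le (X : Set α) (θ : ℝ) :
    mgf (X.indicator 1) ρ θ ≤ exp (ρ.real X * (exp θ - 1)) := by
  have hpt : (fun x => exp (θ * X.indicator 1 x)) = fun x => 1 + (exp θ - 1) * X.indicator 1 x := by
    ext x
    by_cases hx : x ∈ X <;> simp [hx]
  have hint : Integrable (X.indicator (1 : α → ℝ)) ρ :=
    (integrable_const (1 : ℝ)).indicator .of_discrete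
  rw [mgf, hpt, integral_add (integrable_const _) (hint.const_mul _), integral_const_mul,
    integral_indicator_one .of_discrete]
  simp only [integral_const, probReal_univ, smul_eq_mul, one_mul]
  linarith [add_one_le_exp (ρ.real X * (exp θ - 1))]

variable [Countable α]

lemma mgf_indicator_one_comp_eval_pi (X : Set α) (θ : ℝ) (i : Fin n) :
    mgf (fun v : Fin n → α => X.indicator 1 (v i)) (Measure.pi fun _ => ρ) θ
      = mgf (X.indicator 1) ρ θ := by
  have h := mgf_map (μ := Measure.pi fun _ : Fin n => ρ) (X := X.indicator 1) (t := θ)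
    (measurable_pi_apply i).aemeasurable (measurable_of_countable _).aestronglyMeasurable
  rw [(measurePreserving_eval _ i).map_eq] at h
  exact h.symm

lemma measureReal_sampleCount_tail (X : Set α) (θ a : ℝ) :
    (Measure.pi fun _ : Fin n => ρ).real {v | θ * a ≤ θ * sampleCount v X}
      ≤ exp (n * (ρ.real X * (exp θ - 1)) - θ * a) := by
  have hsum : (fun v => sampleCount v X)
      = ∑ i : Fin n, fun v : Fin n → α => X.indicator 1 (v i) := by
    ext v
    simp [sampleCount]
  have hbound : ∀ v : Fin n → α, ‖exp (1 * (θ * sampleCount v X))‖ ≤ exp (|θ| * n) := by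
    intro v
    rw [norm_of_nonneg (exp_pos _).le, one_mul, exp_le_exp]
    calc θ * sampleCount v X ≤ |θ * sampleCount v X| := le_abs_self _
      _ = |θ| * sampleCount v X := by rw [abs_mul, abs_of_nonneg (sampleCount_nonneg v X)]
      _ ≤ |θ| * n := mul_le_mul_of_nonneg_left (sampleCount_le v X) (abs_nonneg θ)
  have hint : Integrable (fun v => exp (1 * (θ * sampleCount v X))) (Measure.pi fun _ => ρ) :=
    .of_bound (measurable_of_countable _).aestronglyMeasurable _ (ae_of_all _ hbound)
  have hindep := iIndepFun_pi (μ := fun _ : Fin n => ρ) (X := fun _ => X.indicator (1 : α → ℝ))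
    fun _ => (measurable_of_countable _).aemeasurable
  calc (Measure.pi fun _ : Fin n => ρ).real {v | θ * a ≤ θ * sampleCount v X}
      ≤ exp (-1 * (θ * a)) * mgf (fun v => θ * sampleCount v X) (Measure.pi fun _ => ρ) 1 :=
        measure_ge_le_exp_mul_mgf _ zero_le_one hint
    _ = exp (-(θ * a)) * mgf (X.indicator 1) ρ θ ^ n := by
        rw [mgf_const_mul, mul_one, hsum, hindep.mgf_sum (fun _ => measurable_of_countable _),
          Finset.prod_congr rfl fun i _ => mgf_indicator_one_comp_eval_pi X θ i, Finset.prod_const,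
          Finset.card_univ, Fintype.card_fin, neg_one_mul]
    _ ≤ exp (-(θ * a)) * exp (ρ.real X * (exp θ - 1)) ^ n := by
        gcongr
        · exact mgf_nonneg
        · exact mgf_indicator_one_le X θ
    _ = exp (n * (ρ.real X * (exp θ - 1)) - θ * a) := by
        rw [← exp_nat_mul, ← exp_add]
        ring_nf

lemma measureReal_sampleCount_tail_le {X : Set α} {q s : ℝ} (hX : ρ.real X ≤ q) (hs : |s| ≤ 1)
    (a : ℝ) :
    (Measure.pi fun _ : Fin n => ρ).real {v | s * a ≤ s * sampleCount v X}
      ≤ exp (n * (q * s ^ 2) + s * (n * ρ.real X - a)) := by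
  refine (measureReal_sampleCount_tail X s a).trans (exp_le_exp.2 ?_)
  have hquad := (abs_le.1 (abs_exp_sub_one_sub_id_le hs)).2
  have hp : ρ.real X * (exp s - 1 - s) ≤ q * s ^ 2 :=
    mul_le_mul hX hquad (by linarith [add_one_le_exp s]) (hX.trans' measureReal_nonneg)
  have hn : (0 : ℝ) ≤ n := n.cast_nonneg
  nlinarith

lemma sq_mul_sub_le_neg_min {q t : ℝ} (hq : 0 < q) (ht : 0 < t) :
    q * min 1 (t / (2 * q)) ^ 2 - min 1 (t / (2 * q)) * t ≤ -min (t ^ 2 / (4 * q)) (t / 2) := by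
  rcases le_total (t / (2 * q)) 1 with h | h
  · rw [min_eq_right h]
    have : q * (t / (2 * q)) ^ 2 - t / (2 * q) * t = -(t ^ 2 / (4 * q)) := by
      field_simp
      ring
    linarith [min_le_left (t ^ 2 / (4 * q)) (t / 2)]
  · rw [min_eq_left h]
    rw [le_div_iff₀ (by positivity), one_mul] at h
    linarith [min_le_right (t ^ 2 / (4 * q)) (t / 2)]

lemma measureReal_abs_sampleDev_gt_le {X : Set α} {q t : ℝ} (hq : 0 < q) (ht : 0 < t)
    (hX : ρ.real X ≤ q) :
    (Measure.pi fun _ : Fin n => ρ).real {v | n * t < |sampleDev ρ v X|}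
      ≤ 2 * exp (-(n * min (t ^ 2 / (4 * q)) (t / 2))) := by
  set s := min 1 (t / (2 * q))
  have hs0 : 0 < s := lt_min one_pos (by positivity)
  have hs1 : |s| ≤ 1 := by rw [abs_of_pos hs0]; exact min_le_left _ _
  have hkey := sq_mul_sub_le_neg_min hq ht
  have hn : (0 : ℝ) ≤ n := n.cast_nonneg
  have hsub : {v : Fin n → α | n * t < |sampleDev ρ v X|}
      ⊆ {v | s * (n * (ρ.real X + t)) ≤ s * sampleCount v X}
        ∪ {v | -s * (n * (ρ.real X - t)) ≤ -s * sampleCount v X} := by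
    intro v hv
    simp only [mem_ofPred_eq, sampleDev, lt_abs, mem_union] at hv ⊢
    rcases hv with hv | hv
    · exact .inl (mul_le_mul_of_nonneg_left (by linarith) hs0.le)
    · exact .inr (by nlinarith)
  calc _ ≤ _ := measureReal_mono hsub
    _ ≤ _ := measureReal_union_le _ _
    _ ≤ exp (n * (q * s ^ 2) + s * (n * ρ.real X - n * (ρ.real X + t)))
        + exp (n * (q * (-s) ^ 2) + -s * (n * ρ.real X - n * (ρ.real X - t))) :=
        add_le_add (measureReal_sampleCount_tail_le hX hs1 _)
          (measureReal_sampleCount_tail_le hX (by rwa [abs_neg]) _)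
    _ ≤ 2 * exp (-(n * min (t ^ 2 / (4 * q)) (t / 2))) := by
        rw [two_mul]
        gcongr <;> nlinarith

end Chernoff

section ChainingBound

open Real

def chainStep (ε : ℝ) (ℓ : ℕ) : ℝ := ε / 20 * (5 / 6) ^ ℓ

lemma sum_chainStep_le {ε : ℝ} (hε : 0 ≤ ε) (J : ℕ) :
    ∑ ℓ ∈ Finset.range (J + 1), chainStep ε ℓ ≤ 3 / 10 * ε := by
  have hgeom : ∑ ℓ ∈ Finset.range (J + 1), (5 / 6 : ℝ) ^ ℓ ≤ 6 := by
    rw [geom_sum_eq (by norm_num)]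
    have : (0 : ℝ) < (5 / 6) ^ (J + 1) := by positivity
    rw [div_le_iff_of_neg (by norm_num)]
    linarith
  simp only [chainStep, ← Finset.mul_sum]
  nlinarith

lemma exists_chainDepth {ε : ℝ} (hε : 0 < ε) (hε1 : ε ≤ 1) :
    ∃ J : ℕ, (1 / 2 : ℝ) ^ J ≤ ε / 8 ∧ ε * 2 ^ J ≤ 16 := by
  obtain ⟨J, hle, hlt⟩ := exists_nat_pow_near (x := 16 / ε) (y := (2 : ℝ))
    (by rw [le_div_iff₀ hε]; linarith) one_lt_two
  refine ⟨J, ?_, by rwa [le_div_iff₀ hε, mul_comm] at hle⟩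
  rw [pow_succ, div_lt_iff₀ hε] at hlt
  rw [div_pow, one_pow, div_le_iff₀ (by positivity)]
  linarith

lemma chainStep_exponent_le {ε : ℝ} (hε : 0 < ε) {J ℓ : ℕ} (hJ : ε * 2 ^ J ≤ 16) (hℓ : ℓ ≤ J) :
    ε ^ 2 / 3200 * (25 / 18) ^ ℓ
      ≤ min (chainStep ε ℓ ^ 2 / (4 * (2 * (1 / 2) ^ ℓ))) (chainStep ε ℓ / 2) := by
  refine le_min (le_of_eq ?_) ?_
  · have h1 : ((5 / 6 : ℝ) ^ ℓ) ^ 2 = (25 / 36) ^ ℓ := by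
      rw [← pow_mul, mul_comm, pow_mul]; norm_num
    have h2 : (25 / 18 : ℝ) ^ ℓ = (25 / 36) ^ ℓ * 2 ^ ℓ := by rw [← mul_pow]; norm_num
    rw [chainStep, mul_pow, h1, h2, one_div_pow]
    field_simp
    ring
  · have h53 : ε * (5 / 3) ^ ℓ ≤ 80 := by
      have : (5 / 3 : ℝ) ^ ℓ ≤ 2 ^ J :=
        (pow_le_pow_left₀ (by norm_num) (by norm_num) ℓ).trans (pow_le_pow_right₀ one_le_two hℓ)
      nlinarith
    have hsplit : (25 / 18 : ℝ) ^ ℓ = (5 / 6) ^ ℓ * (5 / 3) ^ ℓ := by rw [← mul_pow]; norm_num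
    rw [chainStep, hsplit]
    have : (0 : ℝ) ≤ ε * (5 / 6) ^ ℓ := by positivity
    nlinarith

lemma sum_chainLinks_le {K : ℝ} (hK : 8 ≤ K) (J : ℕ) :
    ∑ ℓ ∈ Finset.range (J + 1), ((2 : ℝ) ^ ℓ + 1) * (2 * exp (-(K * (25 / 18) ^ ℓ)))
      ≤ 8 * exp (-K) := by
  have hhalf : 2 * exp (-(7 / 18 * K)) ≤ 1 / 2 := by
    have : (4 : ℝ) ≤ exp (7 / 18 * K) := by linarith [add_one_le_exp (7 / 18 * K)]
    rw [exp_neg, ← div_eq_mul_inv, div_le_iff₀ (exp_pos _)]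
    linarith
  have hterm : ∀ ℓ : ℕ, ((2 : ℝ) ^ ℓ + 1) * (2 * exp (-(K * (25 / 18) ^ ℓ)))
      ≤ 4 * exp (-K) * (1 / 2) ^ ℓ := by
    intro ℓ
    have hbern : 1 + ℓ * (7 / 18 : ℝ) ≤ (25 / 18) ^ ℓ := by
      have := one_add_mul_le_pow (by norm_num : (-2 : ℝ) ≤ 7 / 18) ℓ
      norm_num at this ⊢
      linarith
    have hexp : exp (-(K * (25 / 18) ^ ℓ)) ≤ exp (-K) * exp (-(7 / 18 * K)) ^ ℓ := by
      rw [← exp_nat_mul, ← exp_add, exp_le_exp]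
      nlinarith
    have hcount : ((2 : ℝ) ^ ℓ + 1) * 2 ≤ 4 * 2 ^ ℓ := by
      nlinarith [one_le_pow₀ (M₀ := ℝ) (a := 2) (by norm_num) (n := ℓ)]
    calc ((2 : ℝ) ^ ℓ + 1) * (2 * exp (-(K * (25 / 18) ^ ℓ)))
        ≤ 4 * 2 ^ ℓ * (exp (-K) * exp (-(7 / 18 * K)) ^ ℓ) := by
          rw [← mul_assoc]; gcongr
      _ = 4 * exp (-K) * (2 * exp (-(7 / 18 * K))) ^ ℓ := by ring
      _ ≤ 4 * exp (-K) * (1 / 2) ^ ℓ := by gcongr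
  calc _ ≤ ∑ ℓ ∈ Finset.range (J + 1), 4 * exp (-K) * (1 / 2) ^ ℓ :=
        Finset.sum_le_sum fun ℓ _ => hterm ℓ
    _ ≤ 4 * exp (-K) * 2 := by rw [← Finset.mul_sum]; gcongr; exact sum_geometric_two_le _
    _ = 8 * exp (-K) := by ring

end ChainingBound

section UniformDeviation

open Real

variable {α : Type*} [MeasurableSpace α] [DiscreteMeasurableSpace α] [Countable α]
  {ρ : Measure α} [IsProbabilityMeasure ρ] {n : ℕ}

lemma measureReal_chainBadSet_le (f : α → ℝ) {ε : ℝ} (hε : 0 < ε) {J : ℕ} (hJ : ε * 2 ^ J ≤ 16)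
    (hK : 8 ≤ n * ε ^ 2 / 3200) :
    (Measure.pi fun _ : Fin n => ρ).real (chainBadSet f ρ n (chainStep ε) J)
      ≤ 8 * exp (-(n * ε ^ 2 / 3200)) := by
  have hlink : ∀ ℓ ≤ J, ∀ k, (Measure.pi fun _ : Fin n => ρ).real
      {v | ρ.real (chainLink f ρ ℓ k) ≤ 2 * (1 / 2) ^ ℓ ∧
        n * chainStep ε ℓ < |sampleDev ρ v (chainLink f ρ ℓ k)|}
      ≤ 2 * exp (-(n * ε ^ 2 / 3200 * (25 / 18) ^ ℓ)) := by
    intro ℓ hℓ k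
    by_cases hq : ρ.real (chainLink f ρ ℓ k) ≤ 2 * (1 / 2) ^ ℓ
    · simp only [hq, true_and]
      refine (measureReal_abs_sampleDev_gt_le (by positivity) (by unfold chainStep; positivity)
        hq).trans ?_
      have := mul_le_mul_of_nonneg_left (chainStep_exponent_le hε hJ hℓ) n.cast_nonneg
      refine mul_le_mul_of_nonneg_left (exp_le_exp.2 ?_) zero_le_two
      linarith
    · simp only [hq, false_and, ofPred_false, measureReal_empty]
      positivity
  calc _ ≤ ∑ ℓ ∈ Finset.range (J + 1), ∑ k ∈ Finset.range (2 ^ ℓ + 1),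
        (Measure.pi fun _ : Fin n => ρ).real
          {v | ρ.real (chainLink f ρ ℓ k) ≤ 2 * (1 / 2) ^ ℓ ∧
            n * chainStep ε ℓ < |sampleDev ρ v (chainLink f ρ ℓ k)|} :=
        (measureReal_biUnion_finset_le _ _).trans
          (Finset.sum_le_sum fun _ _ => measureReal_biUnion_finset_le _ _)
    _ ≤ ∑ ℓ ∈ Finset.range (J + 1),
        ((2 : ℝ) ^ ℓ + 1) * (2 * exp (-(n * ε ^ 2 / 3200 * (25 / 18) ^ ℓ))) := by
        gcongr with ℓ hℓ
        refine (Finset.sum_le_sum fun k _ => hlink ℓ (by simp at hℓ; omega) k).trans_eq ?_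
        simp
    _ ≤ 8 * exp (-(n * ε ^ 2 / 3200)) := sum_chainLinks_le hK J

theorem measureReal_exists_isUpperFor_abs_sampleDev_gt_le (f : α → ℝ) {ε : ℝ} (hε : 0 < ε)
    (hε1 : ε ≤ 1) (hK : 8 ≤ n * ε ^ 2 / 3200) :
    (Measure.pi fun _ : Fin n => ρ).real
        {v | ∃ U, IsUpperFor f U ∧ n * ε / 2 < |sampleDev ρ v U|}
      ≤ 16 * exp (-(n * ε ^ 2 / 3200)) := by
  obtain ⟨J, hJε, hJ⟩ := exists_chainDepth hε hε1
  have hsub : {v : Fin n → α | ∃ U, IsUpperFor f U ∧ n * ε / 2 < |sampleDev ρ v U|}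
      ⊆ chainBadSet f ρ n (chainStep ε) J ∪ chainBadSet (-f) ρ n (chainStep ε) J := by
    rintro v ⟨U, hU, hdev⟩
    by_contra hv
    rw [mem_union, not_or] at hv
    have hle := abs_sampleDev_le_of_isUpperFor hv.1 hv.2 hU
    have hsum := sum_chainStep_le hε.le J
    have hn : (0 : ℝ) ≤ n := n.cast_nonneg
    nlinarith
  calc _ ≤ _ := measureReal_mono hsub
    _ ≤ _ := measureReal_union_le _ _
    _ ≤ 8 * exp (-(n * ε ^ 2 / 3200)) + 8 * exp (-(n * ε ^ 2 / 3200)) :=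
        add_le_add (measureReal_chainBadSet_le f hε hJ hK)
          (measureReal_chainBadSet_le (-f) hε hJ hK)
    _ = 16 * exp (-(n * ε ^ 2 / 3200)) := by ring

end UniformDeviation

section Prefix

open Real

variable {A : Type*} [Fintype A]

instance : DiscreteMeasurableSpace (List A) := ⟨fun _ => trivial⟩

lemma pre_eq_sdiff (w : List A) :
    pre w = {v : List A | wordCode w ≤ wordCode v}
      \ {v : List A | wordCode w + (codeBase A)⁻¹ ^ w.length ≤ wordCode v} := by
  ext v
  simp [pre, isPrefix_iff_wordCode]

theorem measureReal_exists_prefix_abs_sampleDev_gt_le {ρ : Measure (List A)}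
    [IsProbabilityMeasure ρ] {n : ℕ} {ε : ℝ} (hε : 0 < ε) (hε1 : ε ≤ 1)
    (hK : 8 ≤ n * ε ^ 2 / 3200) :
    (Measure.pi fun _ : Fin n => ρ).real {v | ∃ w : List A, n * ε < |sampleDev ρ v (pre w)|}
      ≤ 16 * exp (-(n * ε ^ 2 / 3200)) := by
  refine (measureReal_mono ?_).trans
    (measureReal_exists_isUpperFor_abs_sampleDev_gt_le wordCode hε hε1 hK)
  rintro v ⟨w, hw⟩
  by_contra h
  simp only [mem_ofPred_eq, not_exists, not_and, not_lt] at h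
  have hsub : {v : List A | wordCode w + (codeBase A)⁻¹ ^ w.length ≤ wordCode v}
      ⊆ {v : List A | wordCode w ≤ wordCode v} := fun v hv =>
    le_trans (le_add_of_nonneg_right (pow_nonneg (inv_nonneg.2 (codeBase_pos (A := A)).le) _)) hv
  rw [pre_eq_sdiff, sampleDev_sdiff v hsub] at hw
  have h1 := h _ (isUpperFor_setOf_le (wordCode w))
  have h2 := h _ (isUpperFor_setOf_le (wordCode w + (codeBase A)⁻¹ ^ w.length))
  linarith [abs_sub (sampleDev ρ v {v : List A | wordCode w ≤ wordCode v})
    (sampleDev ρ v {v : List A | wordCode w + (codeBase A)⁻¹ ^ w.length ≤ wordCode v})]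

end Prefix

section StochasticLanguage

variable {A : Type*} {P : List A → ℝ}

def stochasticPMF (hP : IsStochastic P) : PMF (List A) :=
  ⟨fun w => ENNReal.ofReal (P w), by
    have h := ENNReal.ofReal_tsum_of_nonneg hP.1 hP.2.summable
    rw [hP.2.tsum_eq, ENNReal.ofReal_one] at h
    exact h ▸ ENNReal.summable.hasSum⟩

lemma stochasticPMF_toMeasure_apply (hP : IsStochastic P) (s : Set (List A)) :
    (stochasticPMF hP).toMeasure s = ∑' w : s, ENNReal.ofReal (P w) := by
  rw [PMF.toMeasure_apply _ .of_discrete, ← tsum_subtype]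
  rfl

lemma measureReal_stochasticPMF_toMeasure (hP : IsStochastic P) (s : Set (List A)) :
    (stochasticPMF hP).toMeasure.real s = ∑' w : s, P w := by
  rw [measureReal_def, stochasticPMF_toMeasure_apply hP,
    ENNReal.tsum_toReal_eq fun _ => ENNReal.ofReal_ne_top]
  exact tsum_congr fun w => ENNReal.toReal_ofReal (hP.1 w)

lemma isIIDProduct_map_eq_pi (hP : IsStochastic P) {μ : Measure (ℕ → List A)}
    (hμ : IsIIDProduct P μ) (n : ℕ) :
    μ.map (fun ω (i : Fin n) => ω i) = Measure.pi fun _ => (stochasticPMF hP).toMeasure := by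
  refine (Measure.pi_eq fun s _ => ?_).symm
  have hproj : Measurable fun (ω : ℕ → List A) (i : Fin n) => ω i :=
    measurable_pi_lambda _ fun i => measurable_pi_apply _
  rw [Measure.map_apply hproj (.univ_pi fun _ => .of_discrete)]
  let E : ℕ → Set (List A) := fun j => if h : j < n then s ⟨j, h⟩ else univ
  have hpre : (fun (ω : ℕ → List A) (i : Fin n) => ω i) ⁻¹' univ.pi s
      = {ω | ∀ j ∈ Finset.range n, ω j ∈ E j} := by
    ext ω
    simp only [mem_preimage, mem_univ_pi, Finset.mem_range, mem_ofPred_eq]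
    exact ⟨fun h j hj => by simpa [E, hj] using h ⟨j, hj⟩,
      fun h i => by simpa [E, i.isLt] using h i i.isLt⟩
  rw [hpre, hμ, ← Fin.prod_univ_eq_prod_range (fun j => ∑' w : E j, ENNReal.ofReal (P w))]
  refine Finset.prod_congr rfl fun i _ => ?_
  rw [stochasticPMF_toMeasure_apply hP, show E i = s i from dif_pos i.isLt]

end StochasticLanguage

lemma emp_eq_sampleCount_div {A : Type*} (ω : ℕ → List A) (n : ℕ) (X : Set (List A)) :
    emp ω n X = sampleCount (fun i : Fin n => ω i) X / n := by
  rw [emp, sampleCount, Fin.sum_univ_eq_sum_range (fun i => X.indicator 1 (ω i))]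
  rfl

lemma abs_emp_sub_le_iff {A : Type*} {ρ : Measure (List A)} (ω : ℕ → List A) {n : ℕ} (hn : 0 < n)
    (X : Set (List A)) (ε : ℝ) :
    |emp ω n X - ρ.real X| ≤ ε ↔ |sampleDev ρ (fun i : Fin n => ω i) X| ≤ n * ε := by
  have hn' : (0 : ℝ) < n := by exact_mod_cast hn
  rw [emp_eq_sampleCount_div, sampleDev, div_sub' hn'.ne', abs_div, abs_of_pos hn',
    div_le_iff₀ hn', mul_comm ε]

lemma ofReal_one_sub_lt_of_measureReal_compl_lt {Ω : Type*} [MeasurableSpace Ω] {μ : Measure Ω}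
    [IsProbabilityMeasure μ] {s : Set Ω} (hs : MeasurableSet s) {δ : ℝ} (hδ : δ ≤ 1)
    (h : μ.real sᶜ < δ) : ENNReal.ofReal (1 - δ) < μ s := by
  rw [← ofReal_measureReal, ENNReal.ofReal_lt_ofReal_iff', measureReal_compl hs, probReal_univ] at *
  constructor <;> linarith [measureReal_nonneg (μ := μ) (s := s)]

lemma measure_setOf_forall_abs_emp_sub_le {A : Type*} [Countable A] {P : List A → ℝ}
    (hP : IsStochastic P) {μ : Measure (ℕ → List A)} (hμ : IsIIDProduct P μ) {n : ℕ}
    (hn : 0 < n) (ε : ℝ) :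
    μ {ω | ∀ w : List A, |emp ω n (pre w) - ∑' v : pre w, P v| ≤ ε}
      = (Measure.pi fun _ : Fin n => (stochasticPMF hP).toMeasure)
          {v | ∃ w, n * ε < |sampleDev (stochasticPMF hP).toMeasure v (pre w)|}ᶜ := by
  have hproj : Measurable fun (ω : ℕ → List A) (i : Fin n) => ω i :=
    measurable_pi_lambda _ fun i => measurable_pi_apply _
  rw [← isIIDProduct_map_eq_pi hP hμ n, Measure.map_apply hproj (to_countable _).measurableSet]
  congr 1
  ext ω
  simp only [← measureReal_stochasticPMF_toMeasure hP, abs_emp_sub_le_iff ω hn, mem_preimage,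
    mem_compl_iff, mem_ofPred_eq, not_exists, not_lt]

lemma exponent_bounds_of_sampleSize {ε δ : ℝ} {n : ℕ} (hε : 0 < ε) (hδ : δ ∈ Ioo 0 1)
    (hn : 3200 ^ 2 / ε ^ 2 * (2 - Real.log (δ / 4)) ≤ n) :
    8 ≤ n * ε ^ 2 / 3200 ∧ 16 * Real.exp (-(n * ε ^ 2 / 3200)) < δ := by
  have hlogδ : Real.log δ < 0 := Real.log_neg hδ.1 hδ.2
  have hlog : Real.log (δ / 4) ≤ Real.log δ :=
    Real.log_le_log (by linarith [hδ.1]) (by linarith [hδ.1])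
  rw [div_mul_eq_mul_div, div_le_iff₀ (by positivity)] at hn
  have hK : 6400 - Real.log δ ≤ n * ε ^ 2 / 3200 := by nlinarith
  have h16 : 16 < Real.exp 6400 := by linarith [Real.add_one_le_exp 6400]
  refine ⟨by linarith, ?_⟩
  calc 16 * Real.exp (-(n * ε ^ 2 / 3200)) ≤ 16 * Real.exp (Real.log δ - 6400) := by
        gcongr; linarith
    _ = δ * (16 / Real.exp 6400) := by rw [Real.exp_sub, Real.exp_log hδ.1]; ring
    _ < δ := mul_lt_of_lt_one_right hδ.1 ((div_lt_one (Real.exp_pos _)).2 h16)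

end

end PrefixDeviation

open PrefixDeviation in
theorem statement19 :
    ∃ c > (0 : ℝ), ∀ (A : Type) (_ : Fintype A) (_ : Nonempty A) (P : List A → ℝ),
      IsStochastic P → ∀ ε > (0 : ℝ), ∀ δ ∈ Set.Ioo (0 : ℝ) 1, ∀ n : ℕ,
        c ^ 2 / ε ^ 2 * (2 - Real.log (δ / 4)) ≤ (n : ℝ) →
        ∀ μ : Measure (ℕ → List A), IsIIDProduct P μ →
          ENNReal.ofReal (1 - δ) <
            μ {ω | ∀ w : List A, |emp ω n (pre w) - ∑' v : pre w, P (v : List A)| ≤ ε} := by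
  refine ⟨3200, by norm_num, ?_⟩
  intro A _ _ P hP ε hε δ hδ n hn μ hμ
  obtain ⟨hK, hexp⟩ := exponent_bounds_of_sampleSize hε hδ hn
  have hn0 : 0 < n := Nat.pos_of_ne_zero fun h => by norm_num [h] at hK
  rw [measure_setOf_forall_abs_emp_sub_le hP hμ hn0]
  refine ofReal_one_sub_lt_of_measureReal_compl_lt (to_countable _).measurableSet hδ.2.le ?_
  rw [compl_compl]
  rcases le_or_gt ε 1 with hε1 | hε1
  · exact (measureReal_exists_prefix_abs_sampleDev_gt_le hε hε1 hK).trans_lt hexp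
  · rw [setOf_exists_abs_sampleDev_gt_eq_empty pre hn0 hε1, measureReal_empty]
    exact hδ.1
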